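/- Fix α>0 and L>0, and let Z be a symmetric random variable with P(|Z| ≥ t) = exp(−min{t², (t/L)^α}) for all t ≥ 0. Then min{√2, 2^{1/α}} ≤ ‖Z‖_{φ_{α,L}} ≤ max{√3, 3^{1/α}}. -/

import Mathlib

open MeasureTheory ProbabilityTheory Real

/-- The Generalized Bernstein-Orlicz function `φ_{α,L}(x) = exp(min{x², (x/L)^α}) − 1`. -/
noncomputable def phiGBO (α L x : ℝ) : ℝ := Real.exp (min (x ^ 2) ((x / L) ^ α)) - 1

/-- The `g`-Orlicz norm `‖X‖_g = inf{η > 0 : E[g(|X|/η)] ≤ 1}`. -/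
noncomputable def orliczNorm {Ω : Type*} {mΩ : MeasurableSpace Ω} (μ : Measure Ω)
    (g : ℝ → ℝ) (X : Ω → ℝ) : ℝ :=
  sInf {η : ℝ | 0 < η ∧ ∫⁻ ω, ENNReal.ofReal (g (|X ω| / η)) ∂μ ≤ 1}

/-! With `m = gboRate α L`, i.e. `m t = min (t ^ 2) ((t / L) ^ α)`, an increasing bijection
of `[0, ∞)`, the tail hypothesis says that `m |Z|` is a standard exponential variable, so by the layer-cake formula
`E[exp (m |Z| / c) - 1] = ∫₀^∞ (1 + s)^(-c) ds = 1 / (c - 1)` for every `c > 1`.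
Dividing `|Z|` by `η` divides the two branches of `m` by `η ^ 2` and `η ^ α`, hence
`m |Z| / max (η ^ 2) (η ^ α) ≤ m (|Z| / η) ≤ m |Z| / min (η ^ 2) (η ^ α)`.
For `η = max (√3) (3 ^ (1/α))` this bounds `E[φ(|Z|/η)]` by `1/2`, while for
`η < min (√2) (2 ^ (1/α))` it bounds it below by `1/(c - 1) > 1` for some `c ∈ (1, 2)`. -/

open Set

noncomputable def gboRate (α L t : ℝ) : ℝ := min (t ^ 2) ((t / L) ^ α)

section Rate

variable {α L : ℝ}

lemma gboRate_nonneg (hL : 0 ≤ L) {t : ℝ} (ht : 0 ≤ t) : 0 ≤ gboRate α L t :=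
  le_min (sq_nonneg t) (rpow_nonneg (div_nonneg ht hL) α)

lemma measurable_gboRate : Measurable (gboRate α L) := by
  unfold gboRate; fun_prop

lemma le_gboRate_iff (hα : 0 < α) (hL : 0 < L) {u t : ℝ} (hu : 0 ≤ u) (ht : 0 ≤ t) :
    u ≤ gboRate α L t ↔ max (√u) (L * u ^ α⁻¹) ≤ t := by
  rw [gboRate, le_min_iff, max_le_iff, sqrt_le_iff, ← le_div_iff₀' hL,
    rpow_inv_le_iff_of_pos hu (div_nonneg ht hL.le) hα]
  simp [ht]

lemma gboRate_max_sqrt_mul_rpow_inv (hα : 0 < α) (hL : 0 < L) {u : ℝ} (hu : 0 ≤ u) :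
    gboRate α L (max (√u) (L * u ^ α⁻¹)) = u := by
  have hs : 0 ≤ max (√u) (L * u ^ α⁻¹) := (sqrt_nonneg u).trans (le_max_left _ _)
  refine le_antisymm ?_ ((le_gboRate_iff hα hL hu hs).2 le_rfl)
  rcases max_cases (√u) (L * u ^ α⁻¹) with ⟨h, -⟩ | ⟨h, -⟩ <;> rw [h]
  · exact (min_le_left _ _).trans (sq_sqrt hu).le
  · refine (min_le_right _ _).trans_eq ?_
    rw [mul_div_cancel_left₀ _ hL.ne', rpow_inv_rpow hu hα.ne']

lemma gboRate_div {η : ℝ} (hL : 0 ≤ L) (hη : 0 ≤ η) {x : ℝ} (hx : 0 ≤ x) :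
    gboRate α L (x / η) = min (x ^ 2 / η ^ 2) ((x / L) ^ α / η ^ α) := by
  rw [gboRate, div_pow, div_right_comm, div_rpow (div_nonneg hx hL) hη]

lemma gboRate_div_le_div {η c : ℝ} (hL : 0 ≤ L) (hη : 0 < η) (hc : 0 < c)
    (hcη : c ≤ min (η ^ 2) (η ^ α)) {x : ℝ} (hx : 0 ≤ x) :
    gboRate α L (x / η) ≤ gboRate α L x / c := by
  rw [gboRate_div hL hη.le hx, gboRate, ← min_div_div_right hc.le]
  exact min_le_min (div_le_div_of_nonneg_left (sq_nonneg x) hc (hcη.trans (min_le_left _ _)))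
    (div_le_div_of_nonneg_left (rpow_nonneg (div_nonneg hx hL) α) hc
      (hcη.trans (min_le_right _ _)))

lemma div_le_gboRate_div {η c : ℝ} (hL : 0 ≤ L) (hη : 0 < η)
    (hcη : max (η ^ 2) (η ^ α) ≤ c) {x : ℝ} (hx : 0 ≤ x) :
    gboRate α L x / c ≤ gboRate α L (x / η) := by
  rw [gboRate_div hL hη.le hx]
  refine le_min ?_ ?_
  · exact div_le_div₀ (sq_nonneg x) (min_le_left _ _) (by positivity)
      ((le_max_left _ _).trans hcη)
  · exact div_le_div₀ (rpow_nonneg (div_nonneg hx hL) α) (min_le_right _ _)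
      (rpow_pos_of_pos hη α) ((le_max_right _ _).trans hcη)

end Rate

lemma le_min_sq_rpow {α c η : ℝ} (hα : 0 < α) (hc : 0 ≤ c) (h : max (√c) (c ^ (1 / α)) ≤ η) :
    c ≤ min (η ^ 2) (η ^ α) := by
  have hη : 0 ≤ η := (sqrt_nonneg c).trans ((le_max_left _ _).trans h)
  rw [max_le_iff, sqrt_le_iff, one_div, rpow_inv_le_iff_of_pos hc hη hα] at h
  exact le_min h.1.2 h.2

lemma max_sq_rpow_lt {α c η : ℝ} (hα : 0 < α) (hc : 0 ≤ c) (hη : 0 ≤ η)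
    (h : η < min (√c) (c ^ (1 / α))) : max (η ^ 2) (η ^ α) < c := by
  rw [lt_min_iff, lt_sqrt hη, one_div, lt_rpow_inv_iff_of_pos hη hc hα] at h
  exact max_lt h.1 h.2

lemma lintegral_Ioi_zero_add_one_rpow_neg {c : ℝ} (hc : 1 < c) :
    ∫⁻ s in Ioi (0 : ℝ), ENNReal.ofReal ((s + 1) ^ (-c)) = ENNReal.ofReal ((c - 1)⁻¹) := by
  have hshift := (measurePreserving_add_right volume (1 : ℝ)).setLIntegral_comp_emb
    (measurableEmbedding_addRight 1) (fun t => ENNReal.ofReal (t ^ (-c))) (Ioi 0)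
  rw [hshift, image_add_const_Ioi, zero_add, ← ofReal_integral_eq_lintegral_ofReal
    (integrableOn_Ioi_rpow_of_lt (by linarith) one_pos)
    ((ae_restrict_iff' measurableSet_Ioi).2 (ae_of_all _ fun t ht => rpow_nonneg
      (zero_le_one.trans (le_of_lt ht)) _)),
    integral_Ioi_rpow_of_lt (by linarith) one_pos, one_rpow]
  congr 1
  rw [neg_add_eq_sub, ← neg_sub, neg_div_neg_eq, one_div]

lemma lintegral_exp_div_sub_one_of_measure_le_eq_exp {Ω : Type*} [MeasurableSpace Ω]
    {μ : Measure Ω} {Y : Ω → ℝ} (hY : AEMeasurable Y μ) (hY0 : ∀ ω, 0 ≤ Y ω)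
    (htail : ∀ u, 0 ≤ u → μ {ω | u ≤ Y ω} = ENNReal.ofReal (exp (-u))) {c : ℝ} (hc : 1 < c) :
    ∫⁻ ω, ENNReal.ofReal (exp (Y ω / c) - 1) ∂μ = ENNReal.ofReal ((c - 1)⁻¹) := by
  have hc0 : 0 < c := zero_lt_one.trans hc
  have hf0 : 0 ≤ᵐ[μ] fun ω => exp (Y ω / c) - 1 :=
    ae_of_all _ fun ω => sub_nonneg.2 (one_le_exp (div_nonneg (hY0 ω) hc0.le))
  rw [lintegral_eq_lintegral_meas_le μ hf0 ((hY.div_const c).exp.sub_const 1),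
    ← lintegral_Ioi_zero_add_one_rpow_neg hc]
  refine setLIntegral_congr_fun measurableSet_Ioi fun s hs => ?_
  have hs1 : 0 < s + 1 := by linarith [mem_Ioi.1 hs]
  have hlevel : {ω | s ≤ exp (Y ω / c) - 1} = {ω | c * log (s + 1) ≤ Y ω} := by
    ext ω
    rw [mem_ofPred_eq, mem_ofPred_eq, ← le_div_iff₀' hc0, le_sub_iff_add_le, log_le_iff_le_exp hs1]
  rw [hlevel, htail _ (mul_nonneg hc0.le (log_nonneg (by linarith [mem_Ioi.1 hs]))),
    rpow_def_of_pos hs1, neg_mul_eq_neg_mul, mul_comm]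

section OrliczNorm

variable {Ω : Type*} [MeasurableSpace Ω] {μ : Measure Ω} {g : ℝ → ℝ} {X : Ω → ℝ}

lemma orliczNorm_le {η : ℝ} (hη : 0 < η) (h : ∫⁻ ω, ENNReal.ofReal (g (|X ω| / η)) ∂μ ≤ 1) :
    orliczNorm μ g X ≤ η :=
  csInf_le ⟨0, fun _ hη' => hη'.1.le⟩ ⟨hη, h⟩

lemma le_orliczNorm {a : ℝ} (hne : ∃ η, 0 < η ∧ ∫⁻ ω, ENNReal.ofReal (g (|X ω| / η)) ∂μ ≤ 1)
    (h : ∀ η, 0 < η → η < a → 1 < ∫⁻ ω, ENNReal.ofReal (g (|X ω| / η)) ∂μ) :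
    a ≤ orliczNorm μ g X :=
  le_csInf hne fun η ⟨hη, hη1⟩ => not_lt.1 fun hlt => (h η hη hlt).not_ge hη1

end OrliczNorm

section Tail

variable {α L : ℝ} {Ω : Type*} [MeasurableSpace Ω] {μ : Measure Ω} {Z : Ω → ℝ}

lemma measure_le_gboRate_abs (hα : 0 < α) (hL : 0 < L)
    (hZtail : ∀ t : ℝ, 0 ≤ t →
      μ {ω | t ≤ |Z ω|} = ENNReal.ofReal (exp (-min (t ^ 2) ((t / L) ^ α))))
    {u : ℝ} (hu : 0 ≤ u) :
    μ {ω | u ≤ gboRate α L |Z ω|} = ENNReal.ofReal (exp (-u)) := by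
  have hs : 0 ≤ max (√u) (L * u ^ α⁻¹) := (sqrt_nonneg u).trans (le_max_left _ _)
  have hlevel : {ω | u ≤ gboRate α L |Z ω|} = {ω | max (√u) (L * u ^ α⁻¹) ≤ |Z ω|} :=
    ext fun ω => le_gboRate_iff hα hL hu (abs_nonneg (Z ω))
  rw [hlevel, hZtail _ hs]
  exact congrArg (fun v => ENNReal.ofReal (exp (-v))) (gboRate_max_sqrt_mul_rpow_inv hα hL hu)

lemma lintegral_exp_gboRate_abs_div_sub_one (hα : 0 < α) (hL : 0 < L) (hZ : Measurable Z)
    (hZtail : ∀ t : ℝ, 0 ≤ t →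
      μ {ω | t ≤ |Z ω|} = ENNReal.ofReal (exp (-min (t ^ 2) ((t / L) ^ α))))
    {c : ℝ} (hc : 1 < c) :
    ∫⁻ ω, ENNReal.ofReal (exp (gboRate α L |Z ω| / c) - 1) ∂μ = ENNReal.ofReal ((c - 1)⁻¹) :=
  lintegral_exp_div_sub_one_of_measure_le_eq_exp (measurable_gboRate.comp hZ.abs).aemeasurable
    (fun ω => gboRate_nonneg hL.le (abs_nonneg (Z ω)))
    (fun _ hu => measure_le_gboRate_abs hα hL hZtail hu) hc

lemma lintegral_phiGBO_div_le (hα : 0 < α) (hL : 0 < L) (hZ : Measurable Z)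
    (hZtail : ∀ t : ℝ, 0 ≤ t →
      μ {ω | t ≤ |Z ω|} = ENNReal.ofReal (exp (-min (t ^ 2) ((t / L) ^ α))))
    {η c : ℝ} (hη : 0 < η) (hc : 1 < c) (hcη : c ≤ min (η ^ 2) (η ^ α)) :
    ∫⁻ ω, ENNReal.ofReal (phiGBO α L (|Z ω| / η)) ∂μ ≤ ENNReal.ofReal ((c - 1)⁻¹) := by
  rw [← lintegral_exp_gboRate_abs_div_sub_one hα hL hZ hZtail hc]
  exact lintegral_mono fun ω => ENNReal.ofReal_le_ofReal <| sub_le_sub_right (exp_le_exp.2 <|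
    gboRate_div_le_div hL.le hη (zero_lt_one.trans hc) hcη (abs_nonneg (Z ω))) 1

lemma le_lintegral_phiGBO_div (hα : 0 < α) (hL : 0 < L) (hZ : Measurable Z)
    (hZtail : ∀ t : ℝ, 0 ≤ t →
      μ {ω | t ≤ |Z ω|} = ENNReal.ofReal (exp (-min (t ^ 2) ((t / L) ^ α))))
    {η c : ℝ} (hη : 0 < η) (hc : 1 < c) (hcη : max (η ^ 2) (η ^ α) ≤ c) :
    ENNReal.ofReal ((c - 1)⁻¹) ≤ ∫⁻ ω, ENNReal.ofReal (phiGBO α L (|Z ω| / η)) ∂μ := by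
  rw [← lintegral_exp_gboRate_abs_div_sub_one hα hL hZ hZtail hc]
  exact lintegral_mono fun ω => ENNReal.ofReal_le_ofReal <| sub_le_sub_right (exp_le_exp.2 <|
    div_le_gboRate_div hL.le hη hcη (abs_nonneg (Z ω))) 1

end Tail

theorem GBO_norm_of_Z_general (α L : ℝ) (hα : 0 < α) (hL : 0 < L)
    (Ω : Type) [MeasurableSpace Ω] (μ : Measure Ω)
    (Z : Ω → ℝ) (hZ : Measurable Z)
    (hZtail : ∀ t : ℝ, 0 ≤ t →
      μ {ω | t ≤ |Z ω|} = ENNReal.ofReal (Real.exp (-min (t ^ 2) ((t / L) ^ α)))) :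
    min (Real.sqrt 2) ((2 : ℝ) ^ (1 / α)) ≤ orliczNorm μ (phiGBO α L) Z ∧
      orliczNorm μ (phiGBO α L) Z ≤ max (Real.sqrt 3) ((3 : ℝ) ^ (1 / α)) := by
  set ub := max (√3) ((3 : ℝ) ^ (1 / α))
  have hub : 0 < ub := (sqrt_pos.2 three_pos).trans_le (le_max_left _ _)
  have hint_ub : ∫⁻ ω, ENNReal.ofReal (phiGBO α L (|Z ω| / ub)) ∂μ ≤ 1 :=
    (lintegral_phiGBO_div_le hα hL hZ hZtail hub (by norm_num : (1 : ℝ) < 3)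
      (le_min_sq_rpow hα (by norm_num) le_rfl)).trans (by norm_num)
  refine ⟨le_orliczNorm ⟨ub, hub, hint_ub⟩ fun η hη hlt => ?_, orliczNorm_le hub hint_ub⟩
  -- `1 < c` keeps `E[exp (gboRate α L |Z| / c) - 1] = 1/(c-1)` finite; `c < 2` makes it exceed 1.
  set c := max (max (η ^ 2) (η ^ α)) (3 / 2)
  have hc2 : c < 2 := max_lt (max_sq_rpow_lt hα zero_le_two hη.le hlt) (by norm_num)
  have hc1 : 1 < c := (by norm_num : (1 : ℝ) < 3 / 2).trans_le (le_max_right _ _)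
  refine lt_of_lt_of_le ?_ (le_lintegral_phiGBO_div hα hL hZ hZtail hη hc1 (le_max_left _ _))
  rw [← ENNReal.ofReal_one, ENNReal.ofReal_lt_ofReal_iff (inv_pos.2 (sub_pos.2 hc1))]
  exact one_lt_inv₀ (by linarith) |>.2 (by linarith)

/-- the GBO norm of a symmetric random variable with survival function
`exp(−min{t², (t/L)^α})` lies between `min{√2, 2^{1/α}}` and `max{√3, 3^{1/α}}`. -/
theorem GBO_norm_of_Z (α L : ℝ) (hα : 0 < α) (hL : 0 < L)
    (Ω : Type) [MeasurableSpace Ω] (μ : Measure Ω) [IsProbabilityMeasure μ]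
    (Z : Ω → ℝ) (hZ : Measurable Z)
    (hZsymm : Measure.map Z μ = Measure.map (fun ω => -(Z ω)) μ)
    (hZtail : ∀ t : ℝ, 0 ≤ t →
      μ {ω | t ≤ |Z ω|} = ENNReal.ofReal (Real.exp (-min (t ^ 2) ((t / L) ^ α)))) :
    min (Real.sqrt 2) ((2 : ℝ) ^ (1 / α)) ≤ orliczNorm μ (phiGBO α L) Z ∧
      orliczNorm μ (phiGBO α L) Z ≤ max (Real.sqrt 3) ((3 : ℝ) ^ (1 / α)) :=
  GBO_norm_of_Z_general α L hα hL Ω μ Z hZ hZtail
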